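/- arXiv:1106.3269 — 2 statements merged into one kernel-verified Lean document; each statement's English description precedes it below -/
import Mathlib

section
/- For every ψ̂ ∈ M_0 there exists a unique φ̂ ∈ M satisfying the discrete backward scheme (Ê_φ) with data ψ̂ (equations for 0 ≤ i ≤ I−1, 0 ≤ j ≤ J, with terminal condition φ̂_{I,j} = exp(u_T(x_j)/σ²)). Hence the map Φ̂ : M_0 → M sending ψ̂ to this solution is well defined. -/
noncomputable section

open Real Filter

/-- Sup of `|g|` over `[0,1]` (the sup norm `‖g‖_∞`). -/
def supIcc (g : ℝ → ℝ) : ℝ := ⨆ x : Set.Icc (0:ℝ) 1, |g (x : ℝ)|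

/-- Sup of `|f|` over `[0,1] × ℝ` (the sup norm `‖f‖_∞`). -/
def supF (f : ℝ → ℝ → ℝ) : ℝ := ⨆ p : Set.Icc (0:ℝ) 1 × ℝ, |f (p.1 : ℝ) p.2|

/-- Membership in `M_ε`: all grid entries (for `i ≤ I`, `j ≤ J`) are at least `ε`. -/
def MemM (I J : ℕ) (ε : ℝ) (m : ℕ → ℕ → ℝ) : Prop :=
  ∀ i ≤ I, ∀ j ≤ J, ε ≤ m i j

/-- The discrete backward scheme `(Ê_φ)` with data `ψ`.  Here `Δt = T/I`, `Δx = 1/J`,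
`x_j = j/J`, and the Neumann conventions `m_{i,-1} = m_{i,0}`, `m_{i,J+1} = m_{i,J}`
are realized by the clamped indices `j - 1` (truncated `ℕ`-subtraction) and `min (j+1) J`. -/
def BScheme (T σ : ℝ) (I J : ℕ) (f : ℝ → ℝ → ℝ) (uT : ℝ → ℝ)
    (ψ φ : ℕ → ℕ → ℝ) : Prop :=
  (∀ i < I, ∀ j ≤ J,
      (φ (i+1) j - φ i j) / (T / (I:ℝ))
        + σ^2 / 2 * ((φ i (min (j+1) J) - 2 * φ i j + φ i (j-1)) / (1/(J:ℝ))^2)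
      = -(1/σ^2) * f ((j:ℝ)/(J:ℝ)) (φ i j * ψ i j) * φ i j)
  ∧ ∀ j ≤ J, φ I j = Real.exp (uT ((j:ℝ)/(J:ℝ)) / σ^2)

/-- The discrete forward scheme `(Ê_ψ)` with data `φ` (same conventions as `BScheme`). -/
def FScheme (T σ : ℝ) (I J : ℕ) (f : ℝ → ℝ → ℝ) (m0 : ℝ → ℝ)
    (φ ψ : ℕ → ℕ → ℝ) : Prop :=
  (∀ i < I, ∀ j ≤ J,
      (ψ (i+1) j - ψ i j) / (T / (I:ℝ))
        - σ^2 / 2 * ((ψ (i+1) (min (j+1) J) - 2 * ψ (i+1) j + ψ (i+1) (j-1)) / (1/(J:ℝ))^2)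
      = (1/σ^2) * f ((j:ℝ)/(J:ℝ)) (φ (i+1) j * ψ (i+1) j) * ψ (i+1) j)
  ∧ ∀ j ≤ J, ψ 0 j = m0 ((j:ℝ)/(J:ℝ)) / φ 0 j

/-- Squared grid norm `‖m‖² = max_{0 ≤ i ≤ I} (1/(J+1)) Σ_{j=0}^{J} m_{i,j}²`. -/
def gnormSq (I J : ℕ) (m : ℕ → ℕ → ℝ) : ℝ :=
  (Finset.range (I+1)).sup' (Finset.nonempty_range_iff.mpr (Nat.succ_ne_zero I))
    (fun i => (1/((J:ℝ)+1)) * ∑ j ∈ Finset.range (J+1), (m i j)^2)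

/-- Grid norm `‖m‖`. -/
def gnorm (I J : ℕ) (m : ℕ → ℕ → ℝ) : ℝ := Real.sqrt (gnormSq I J m)


/-!
Row `i` of the backward scheme is an implicit step
`a (v - w) - κ Δ_N v + g(v) = 0` with data `w = φ̂_{i+1}`, `a = I/T`, `κ = σ²J²/2` and the
reaction `g_j(s) = -σ⁻² f(x_j, s ψ̂_{i,j}) s`, which has the sign of `s` because `f ≤ 0`.
Hence the primitives of `g_j` are nonnegative, the energy
`Σ_j (a/2 (v_j - w_j)² + G_j(v_j)) + κ/2 Σ_j (v_{j+1} - v_j)²` is continuous and coercive, and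
its minimiser solves the step. By the discrete minimum principle positive data give positive
solutions, and on positive values `g_j` is nondecreasing (`f(x, ·)` is antitone and `ψ̂ ≥ 0`), so
solutions are ordered like their data and in particular unique. Marching backward from the
positive terminal row gives existence and uniqueness of `φ̂`.
-/

open Finset Function

def neumannLap (J : ℕ) (v : ℕ → ℝ) (j : ℕ) : ℝ := v (min (j + 1) J) - 2 * v j + v (j - 1)

theorem neumannLap_nonneg_of_forall_le {J k : ℕ} {v : ℕ → ℝ} (hk : k ≤ J)
    (hmin : ∀ j ≤ J, v k ≤ v j) : 0 ≤ neumannLap J v k := by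
  have := hmin (min (k + 1) J) (min_le_right _ _)
  have := hmin (k - 1) (by omega)
  unfold neumannLap; linarith

theorem exists_min_image_le {J : ℕ} (v : ℕ → ℝ) : ∃ k ≤ J, ∀ j ≤ J, v k ≤ v j := by
  obtain ⟨k, hk, hmin⟩ := (range (J + 1)).exists_min_image v ⟨0, by simp⟩
  exact ⟨k, mem_range_succ_iff.1 hk, fun j hj => hmin j (mem_range_succ_iff.2 hj)⟩

def dirichletEnergy (J : ℕ) (u : ℕ → ℝ) : ℝ := ∑ j ∈ range J, (u (j + 1) - u j) ^ 2

theorem hasDerivAt_update_apply (v : ℕ → ℝ) (k i : ℕ) (t : ℝ) :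
    HasDerivAt (fun s => update v k s i) (if i = k then 1 else 0) t := by
  split_ifs with h
  · subst h; simpa using hasDerivAt_id' t
  · simpa [update_of_ne h] using hasDerivAt_const t (v i)

theorem hasDerivAt_sum_update {J k : ℕ} (hk : k ≤ J) (F : ℕ → ℝ → ℝ) (v : ℕ → ℝ) {F' : ℝ}
    (hF : HasDerivAt (F k) F' (v k)) :
    HasDerivAt (fun t => ∑ j ∈ range (J + 1), F j (update v k t j)) F' (v k) := by
  have hsum : HasDerivAt (fun t => ∑ j ∈ range (J + 1), F j (update v k t j))
      (∑ j ∈ range (J + 1), if j = k then F' else 0) (v k) := by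
    refine HasDerivAt.fun_sum fun j _ => ?_
    split_ifs with h
    · subst h; simpa using hF
    · simpa [update_of_ne h] using hasDerivAt_const (v k) (F j (v j))
  simpa [sum_ite_eq', Nat.lt_succ_iff.2 hk] using hsum

theorem hasDerivAt_dirichletEnergy_update {J k : ℕ} (hk : k ≤ J) (v : ℕ → ℝ) :
    HasDerivAt (fun t => dirichletEnergy J (update v k t)) (-2 * neumannLap J v k) (v k) := by
  have hterm (j : ℕ) : HasDerivAt (fun t => (update v k t (j + 1) - update v k t j) ^ 2)
      (2 * (v (j + 1) - v j) * ((if j + 1 = k then 1 else 0) - if j = k then 1 else 0)) (v k) := by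
    simpa using ((hasDerivAt_update_apply v k (j + 1) (v k)).fun_sub
      (hasDerivAt_update_apply v k j (v k))).fun_pow 2
  -- only the bonds `(k - 1, k)` and `(k, k + 1)` move; a missing one at an end of the grid is
  -- what the clamped indices in `neumannLap` account for
  refine (HasDerivAt.fun_sum fun j _ => hterm j).congr_deriv ?_
  simp only [mul_sub, mul_ite, mul_one, mul_zero, sum_sub_distrib, neumannLap]
  rcases k with _ | m
  · simp only [Nat.add_one_ne_zero, if_false, sum_const_zero,
      sum_ite_eq', mem_range]
    split_ifs with h
    · rw [min_eq_left (by omega)]; ring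
    · obtain rfl : J = 0 := by omega
      simp only [min_eq_right zero_le_one, zero_add, Nat.zero_sub]; ring
  · simp only [Nat.add_right_cancel_iff, sum_ite_eq', mem_range,
      if_pos (by omega : m < J), Nat.add_sub_cancel]
    split_ifs with h
    · rw [min_eq_left (by omega)]; ring
    · rw [min_eq_right (by omega), show J = m + 1 by omega]; ring

def IsStepSolution (J : ℕ) (a κ : ℝ) (g : ℕ → ℝ → ℝ) (w v : ℕ → ℝ) : Prop :=
  ∀ j ≤ J, a * (v j - w j) - κ * neumannLap J v j + g j (v j) = 0

section StepSolution

variable {J : ℕ} {a κ : ℝ} {g : ℕ → ℝ → ℝ} {w w' v v' : ℕ → ℝ}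

theorem IsStepSolution.pos (ha : 0 < a) (hκ : 0 ≤ κ) (hg : ∀ j ≤ J, ∀ s ≤ 0, g j s ≤ 0)
    (hw : ∀ j ≤ J, 0 < w j) (hv : IsStepSolution J a κ g w v) : ∀ j ≤ J, 0 < v j := by
  obtain ⟨k, hk, hmin⟩ := exists_min_image_le (J := J) v
  suffices 0 < v k from fun j hj => this.trans_le (hmin j hj)
  by_contra! hvk
  have hdrift : a * (v k - w k) < 0 := mul_neg_of_pos_of_neg ha (by linarith [hw k hk])
  have hdiff : 0 ≤ κ * neumannLap J v k := mul_nonneg hκ (neumannLap_nonneg_of_forall_le hk hmin)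
  linarith [hv k hk, hg k hk (v k) hvk]

theorem IsStepSolution.le_of_le (ha : 0 < a) (hκ : 0 ≤ κ)
    (hg : ∀ j ≤ J, MonotoneOn (g j) (Set.Ioi 0)) (hv : IsStepSolution J a κ g w v)
    (hv' : IsStepSolution J a κ g w' v') (hww' : ∀ j ≤ J, w j ≤ w' j)
    (hvpos : ∀ j ≤ J, 0 < v j) (hv'pos : ∀ j ≤ J, 0 < v' j) : ∀ j ≤ J, v j ≤ v' j := by
  obtain ⟨k, hk, hmin⟩ := exists_min_image_le (J := J) fun j => v' j - v j
  suffices 0 ≤ v' k - v k from fun j hj => by linarith [hmin j hj]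
  by_contra! hd
  have hdrift : a * ((v' k - v k) - (w' k - w k)) < 0 :=
    mul_neg_of_pos_of_neg ha (by linarith [hww' k hk])
  have hdiff : 0 ≤ κ * (neumannLap J v' k - neumannLap J v k) := by
    have := neumannLap_nonneg_of_forall_le (v := fun j => v' j - v j) hk hmin
    unfold neumannLap at this
    exact mul_nonneg hκ (by unfold neumannLap; linarith)
  have hreact : g k (v' k) ≤ g k (v k) :=
    hg k hk (hv'pos k hk) (hvpos k hk) (by linarith)
  linarith [hv k hk, hv' k hk]

theorem IsStepSolution.unique (ha : 0 < a) (hκ : 0 ≤ κ) (hg_nonpos : ∀ j ≤ J, ∀ s ≤ 0, g j s ≤ 0)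
    (hg_mono : ∀ j ≤ J, MonotoneOn (g j) (Set.Ioi 0)) (hw : ∀ j ≤ J, 0 < w j)
    (hww' : ∀ j ≤ J, w j = w' j) (hv : IsStepSolution J a κ g w v)
    (hv' : IsStepSolution J a κ g w' v') : ∀ j ≤ J, v j = v' j := by
  have hw' : ∀ j ≤ J, 0 < w' j := fun j hj => hww' j hj ▸ hw j hj
  have hvpos := hv.pos ha hκ hg_nonpos hw
  have hv'pos := hv'.pos ha hκ hg_nonpos hw'
  intro j hj
  exact le_antisymm (hv.le_of_le ha hκ hg_mono hv' (fun i hi => (hww' i hi).le) hvpos hv'pos j hj)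
    (hv'.le_of_le ha hκ hg_mono hv (fun i hi => (hww' i hi).ge) hv'pos hvpos j hj)

end StepSolution

theorem integral_zero_nonneg_of_sign {g : ℝ → ℝ} (hpos : ∀ s, 0 ≤ s → 0 ≤ g s)
    (hneg : ∀ s ≤ 0, g s ≤ 0) (ξ : ℝ) : 0 ≤ ∫ s in (0 : ℝ)..ξ, g s := by
  rcases le_total 0 ξ with h | h
  · exact intervalIntegral.integral_nonneg h fun s hs => hpos s hs.1
  · have : 0 ≤ ∫ s in ξ..0, -g s :=
      intervalIntegral.integral_nonneg h fun s hs => neg_nonneg.2 (hneg s hs.2)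
    rw [intervalIntegral.integral_neg] at this
    rw [intervalIntegral.integral_symm]
    linarith

def stepEnergy (J : ℕ) (a κ : ℝ) (G : ℕ → ℝ → ℝ) (w u : ℕ → ℝ) : ℝ :=
  ∑ j ∈ range (J + 1), (a / 2 * (u j - w j) ^ 2 + G j (u j)) + κ / 2 * dirichletEnergy J u

section StepEnergy

variable {J : ℕ} {a κ : ℝ} {g G : ℕ → ℝ → ℝ}

theorem isStepSolution_of_forall_stepEnergy_le (hG : ∀ j ≤ J, ∀ s, HasDerivAt (G j) (g j s) s)
    {w v : ℕ → ℝ}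
    (hmin : ∀ k ≤ J, ∀ t, stepEnergy J a κ G w v ≤ stepEnergy J a κ G w (update v k t)) :
    IsStepSolution J a κ g w v := by
  intro k hk
  have hder : HasDerivAt (fun t => stepEnergy J a κ G w (update v k t))
      (a * (v k - w k) + g k (v k) + κ / 2 * (-2 * neumannLap J v k)) (v k) := by
    have hterm : HasDerivAt (fun s => a / 2 * (s - w k) ^ 2 + G k s)
        (a * (v k - w k) + g k (v k)) (v k) := by
      refine ((((hasDerivAt_id' (v k)).sub_const (w k)).fun_pow 2).const_mul (a / 2)).fun_add
        (hG k hk (v k)) |>.congr_deriv ?_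
      ring
    exact (hasDerivAt_sum_update hk (fun j s => a / 2 * (s - w j) ^ 2 + G j s) v hterm).add
      ((hasDerivAt_dirichletEnergy_update hk v).const_mul (κ / 2))
  have hloc : IsLocalMin (fun t => stepEnergy J a κ G w (update v k t)) (v k) :=
    Eventually.of_forall fun t => by simpa using hmin k hk t
  linarith [hloc.hasDerivAt_eq_zero hder]

theorem sq_le_stepEnergy (ha : 0 < a) (hκ : 0 ≤ κ) (hG : ∀ j ≤ J, ∀ s, 0 ≤ G j s)
    (w u : ℕ → ℝ) {k : ℕ} (hk : k ≤ J) : a / 2 * (u k - w k) ^ 2 ≤ stepEnergy J a κ G w u := by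
  have hsum : a / 2 * (u k - w k) ^ 2 + G k (u k)
      ≤ ∑ j ∈ range (J + 1), (a / 2 * (u j - w j) ^ 2 + G j (u j)) :=
    single_le_sum (f := fun j => a / 2 * (u j - w j) ^ 2 + G j (u j))
      (fun j hj => add_nonneg (by positivity) (hG j (mem_range_succ_iff.1 hj) _))
      (mem_range_succ_iff.2 hk)
  have : 0 ≤ κ / 2 * dirichletEnergy J u :=
    mul_nonneg (by positivity) (sum_nonneg fun j _ => sq_nonneg _)
  unfold stepEnergy
  linarith [hG k hk (u k)]

theorem continuous_stepEnergy (hG : ∀ j ≤ J, Continuous (G j)) (w : ℕ → ℝ) :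
    Continuous (stepEnergy J a κ G w) := by
  unfold stepEnergy dirichletEnergy
  refine (continuous_finsetSum _ fun j hj => ?_).add (by fun_prop)
  have := hG j (mem_range_succ_iff.1 hj)
  fun_prop

theorem exists_forall_stepEnergy_le_update (ha : 0 < a) (hκ : 0 ≤ κ)
    (hG : ∀ j ≤ J, Continuous (G j)) (hG0 : ∀ j ≤ J, G j 0 = 0)
    (hG_nonneg : ∀ j ≤ J, ∀ s, 0 ≤ G j s)
    (w : ℕ → ℝ) : ∃ v : ℕ → ℝ, ∀ k ≤ J, ∀ t,
      stepEnergy J a κ G w v ≤ stepEnergy J a κ G w (update v k t) := by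
  set R := √(∑ j ∈ range (J + 1), w j ^ 2)
  have hE0 : stepEnergy J a κ G w 0 = a / 2 * R ^ 2 := by
    rw [Real.sq_sqrt (sum_nonneg fun j _ => sq_nonneg _), mul_sum]
    simp only [stepEnergy, dirichletEnergy, Pi.zero_apply, sub_zero, zero_sub, neg_sq,
      zero_pow two_ne_zero, sum_const_zero, mul_zero, add_zero]
    exact sum_congr rfl fun j hj => by rw [hG0 j (mem_range_succ_iff.1 hj), add_zero]
  -- by `sq_le_stepEnergy` and `hE0`, leaving `K` in a single coordinate raises the energy
  -- above its value at `0`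
  set K : Set (ℕ → ℝ) := Set.univ.pi fun j => if j ≤ J then Set.Icc (w j - R) (w j + R) else {0}
  have hK : IsCompact K := isCompact_univ_pi fun j => by
    split_ifs
    exacts [isCompact_Icc, isCompact_singleton]
  have h0K : (0 : ℕ → ℝ) ∈ K := fun j _ => by
    dsimp only
    split_ifs with hj
    · have : |w j| ≤ R := Real.abs_le_sqrt <|
        single_le_sum (f := fun j => w j ^ 2) (fun _ _ => sq_nonneg _) (mem_range_succ_iff.2 hj)
      rw [abs_le] at this
      constructor <;> simp only [Pi.zero_apply] <;> linarith
    · rfl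
  obtain ⟨v, hvK, hvmin⟩ := hK.exists_isMinOn ⟨0, h0K⟩ (continuous_stepEnergy hG w).continuousOn
  refine ⟨v, fun k hk t => ?_⟩
  by_cases ht : t ∈ Set.Icc (w k - R) (w k + R)
  · exact hvmin ((Set.update_mem_pi_iff_of_mem hvK).2 fun _ => by rwa [if_pos hk])
  · have hR : R ^ 2 < (t - w k) ^ 2 := by
      rw [Set.mem_Icc, not_and_or, not_le, not_le] at ht
      have hR0 : 0 ≤ R := Real.sqrt_nonneg _
      rcases ht with ht | ht <;> nlinarith
    calc stepEnergy J a κ G w v ≤ stepEnergy J a κ G w 0 := hvmin h0K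
      _ = a / 2 * R ^ 2 := hE0
      _ ≤ a / 2 * (t - w k) ^ 2 := by gcongr
      _ = a / 2 * (update v k t k - w k) ^ 2 := by rw [update_self]
      _ ≤ _ := sq_le_stepEnergy ha hκ hG_nonneg w _ hk

theorem exists_isStepSolution (ha : 0 < a) (hκ : 0 ≤ κ) (hg : ∀ j ≤ J, Continuous (g j))
    (hg_nonneg : ∀ j ≤ J, ∀ s, 0 ≤ s → 0 ≤ g j s) (hg_nonpos : ∀ j ≤ J, ∀ s ≤ 0, g j s ≤ 0)
    (w : ℕ → ℝ) : ∃ v, IsStepSolution J a κ g w v := by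
  set G : ℕ → ℝ → ℝ := fun j ξ => ∫ s in (0 : ℝ)..ξ, g j s
  have hG : ∀ j ≤ J, ∀ s, HasDerivAt (G j) (g j s) s := fun j hj s =>
    ((hg j hj).integral_hasStrictDerivAt 0 s).hasDerivAt
  obtain ⟨v, hv⟩ := exists_forall_stepEnergy_le_update ha hκ
    (fun j hj => continuous_iff_continuousAt.2 fun s => (hG j hj s).continuousAt)
    (fun j _ => intervalIntegral.integral_same)
    (fun j hj => integral_zero_nonneg_of_sign (hg_nonneg j hj) (hg_nonpos j hj)) w
  exact ⟨v, isStepSolution_of_forall_stepEnergy_le hG hv⟩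

end StepEnergy

theorem exists_backward_chain {α : Type*} {P : α → Prop} {S : ℕ → α → α → Prop} {I : ℕ}
    (hS : ∀ i < I, ∀ w, P w → ∃ v, P v ∧ S i w v) {a : α} (ha : P a) :
    ∃ φ : ℕ → α, φ I = a ∧ (∀ i ≤ I, P (φ i)) ∧ ∀ i < I, S i (φ (i + 1)) (φ i) := by
  classical
  have hS' (i : ℕ) (w : α) : ∃ v, i < I → P w → P v ∧ S i w v :=
    if h : i < I ∧ P w then (hS i h.1 w h.2).imp fun _ hv _ _ => hv
    else ⟨w, fun hi hw => (h ⟨hi, hw⟩).elim⟩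
  choose step hstep using hS'
  -- `row k` is the solution at time index `I - k`
  let row : ℕ → α := fun k => Nat.rec a (fun k r => step (I - (k + 1)) r) k
  have hrow : ∀ k ≤ I, P (row k) := by
    intro k
    induction k with
    | zero => exact fun _ => ha
    | succ k ih => exact fun hk => (hstep _ _ (by omega) (ih (by omega))).1
  refine ⟨fun i => row (I - i), by simp [row], fun i hi => hrow _ (by omega), fun i hi => ?_⟩
  have hsucc : row (I - i) = step i (row (I - (i + 1))) := by
    rw [show I - i = I - (i + 1) + 1 by omega]
    show step (I - (I - (i + 1) + 1)) _ = _
    rw [show I - (I - (i + 1) + 1) = i by omega]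
  show S i (row (I - (i + 1))) (row (I - i))
  rw [hsucc]
  exact (hstep i _ hi (hrow _ (by omega))).2

theorem natCast_div_mem_Icc {j J : ℕ} (hj : j ≤ J) : (j : ℝ) / J ∈ Set.Icc (0 : ℝ) 1 :=
  ⟨by positivity, div_le_one_of_le₀ (by exact_mod_cast hj) (Nat.cast_nonneg J)⟩

def schemeReaction (σ : ℝ) (J : ℕ) (f : ℝ → ℝ → ℝ) (c : ℕ → ℝ) (j : ℕ) (s : ℝ) : ℝ :=
  -(1 / σ ^ 2) * f ((j : ℝ) / (J : ℝ)) (s * c j) * s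

section SchemeReaction

variable {σ : ℝ} {J j : ℕ} {f : ℝ → ℝ → ℝ} {c : ℕ → ℝ}

theorem continuous_schemeReaction (hfc : ∀ x ∈ Set.Icc (0 : ℝ) 1, Continuous (f x)) (hj : j ≤ J) :
    Continuous (schemeReaction σ J f c j) := by
  have := hfc _ (natCast_div_mem_Icc hj)
  unfold schemeReaction
  fun_prop

theorem schemeReaction_nonneg (hfneg : ∀ x ∈ Set.Icc (0 : ℝ) 1, ∀ ξ : ℝ, f x ξ ≤ 0) (hj : j ≤ J)
    {s : ℝ} (hs : 0 ≤ s) : 0 ≤ schemeReaction σ J f c j s :=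
  mul_nonneg (mul_nonneg_of_nonpos_of_nonpos (neg_nonpos.2 (by positivity))
    (hfneg _ (natCast_div_mem_Icc hj) _)) hs

theorem schemeReaction_nonpos (hfneg : ∀ x ∈ Set.Icc (0 : ℝ) 1, ∀ ξ : ℝ, f x ξ ≤ 0) (hj : j ≤ J)
    {s : ℝ} (hs : s ≤ 0) : schemeReaction σ J f c j s ≤ 0 :=
  mul_nonpos_of_nonneg_of_nonpos (mul_nonneg_of_nonpos_of_nonpos (neg_nonpos.2 (by positivity))
    (hfneg _ (natCast_div_mem_Icc hj) _)) hs

theorem monotoneOn_schemeReaction (hfneg : ∀ x ∈ Set.Icc (0 : ℝ) 1, ∀ ξ : ℝ, f x ξ ≤ 0)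
    (hfmono : ∀ x ∈ Set.Icc (0 : ℝ) 1, Antitone (f x)) (hj : j ≤ J) (hc : 0 ≤ c j) :
    MonotoneOn (schemeReaction σ J f c j) (Set.Ioi 0) := by
  intro s hs t ht hst
  have hx := natCast_div_mem_Icc hj
  have hf : f (j / J) (t * c j) ≤ f (j / J) (s * c j) :=
    hfmono _ hx (mul_le_mul_of_nonneg_right hst hc)
  have hft := hfneg _ hx (t * c j)
  have hσ : 0 ≤ 1 / σ ^ 2 := by positivity
  have hs : (0 : ℝ) < s := hs
  unfold schemeReaction
  nlinarith [mul_le_mul_of_nonneg_left hf hσ, mul_nonneg hσ (neg_nonneg.2 hft)]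

end SchemeReaction

theorem bScheme_iff {T σ : ℝ} {I J : ℕ} {f : ℝ → ℝ → ℝ} {uT : ℝ → ℝ} {ψ φ : ℕ → ℕ → ℝ} :
    BScheme T σ I J f uT ψ φ ↔
      (∀ i < I, IsStepSolution J (I / T) (σ ^ 2 * J ^ 2 / 2) (schemeReaction σ J f (ψ i))
        (φ (i + 1)) (φ i)) ∧ ∀ j ≤ J, φ I j = exp (uT (j / J) / σ ^ 2) := by
  refine and_congr (forall₂_congr fun i _ => forall₂_congr fun j _ => ?_) Iff.rfl
  rw [div_div_eq_mul_div, one_div, inv_pow, div_inv_eq_mul]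
  unfold neumannLap schemeReaction
  constructor <;> intro h <;> linear_combination -h

theorem stmt_1_general (T σ : ℝ) (hT : 0 < T)
    (I J : ℕ)
    (f : ℝ → ℝ → ℝ) (uT : ℝ → ℝ)
    (hfc : ∀ x ∈ Set.Icc (0:ℝ) 1, Continuous (f x))
    (hfneg : ∀ x ∈ Set.Icc (0:ℝ) 1, ∀ ξ : ℝ, f x ξ ≤ 0)
    (hfmono : ∀ x ∈ Set.Icc (0:ℝ) 1, Antitone (f x))
    (ψ : ℕ → ℕ → ℝ) (hψ : MemM I J 0 ψ) :
    ∃ φ : ℕ → ℕ → ℝ, BScheme T σ I J f uT ψ φ ∧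
      ∀ φ' : ℕ → ℕ → ℝ, BScheme T σ I J f uT ψ φ' →
        ∀ i ≤ I, ∀ j ≤ J, φ' i j = φ i j := by
  have ha : ∀ i < I, 0 < (I : ℝ) / T := fun i hi =>
    div_pos (by exact_mod_cast (by omega : 0 < I)) hT
  have hκ : 0 ≤ σ ^ 2 * (J : ℝ) ^ 2 / 2 := by positivity
  have hnonpos (i : ℕ) : ∀ j ≤ J, ∀ s ≤ 0, schemeReaction σ J f (ψ i) j s ≤ 0 :=
    fun j hj s hs => schemeReaction_nonpos hfneg hj hs
  have hstep : ∀ i < I, ∀ w : ℕ → ℝ, (∀ j ≤ J, 0 < w j) → ∃ v : ℕ → ℝ, (∀ j ≤ J, 0 < v j) ∧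
      IsStepSolution J (I / T) (σ ^ 2 * J ^ 2 / 2) (schemeReaction σ J f (ψ i)) w v := by
    intro i hi w hw
    obtain ⟨v, hv⟩ := exists_isStepSolution (ha i hi) hκ
      (fun j hj => continuous_schemeReaction hfc hj)
      (fun j hj s hs => schemeReaction_nonneg hfneg hj hs) (hnonpos i) w
    exact ⟨v, hv.pos (ha i hi) hκ (hnonpos i) hw, hv⟩
  obtain ⟨φ, hφI, hφpos, hφ⟩ :=
    exists_backward_chain hstep (a := fun j => exp (uT (j / J) / σ ^ 2)) fun j _ => exp_pos _
  refine ⟨φ, bScheme_iff.2 ⟨hφ, fun j _ => by rw [hφI]⟩, fun φ' hφ' i hi => ?_⟩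
  rw [bScheme_iff] at hφ'
  induction hi using Nat.decreasingInduction with
  | self => exact fun j hj => by rw [hφ'.2 j hj, hφI]
  | of_succ i hi ih =>
    exact fun j hj => ((hφ i hi).unique (ha i hi) hκ (hnonpos i)
      (fun j hj => monotoneOn_schemeReaction hfneg hfmono hj (hψ i hi.le j hj))
      (hφpos (i + 1) hi) (fun j hj => (ih j hj).symm) (hφ'.1 i hi) j hj).symm

theorem stmt_1 (T σ : ℝ) (hT : 0 < T) (hσ : 0 < σ)
    (I J : ℕ) (hI : 1 ≤ I) (hJ : 1 ≤ J)
    (f : ℝ → ℝ → ℝ) (uT m0 : ℝ → ℝ)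
    (hfc : ∀ x ∈ Set.Icc (0:ℝ) 1, Continuous (f x))
    (hfb : ∃ B : ℝ, ∀ x ∈ Set.Icc (0:ℝ) 1, ∀ ξ : ℝ, |f x ξ| ≤ B)
    (hfneg : ∀ x ∈ Set.Icc (0:ℝ) 1, ∀ ξ : ℝ, f x ξ ≤ 0)
    (hfmono : ∀ x ∈ Set.Icc (0:ℝ) 1, Antitone (f x))
    (huTb : ∃ B : ℝ, ∀ x ∈ Set.Icc (0:ℝ) 1, |uT x| ≤ B)
    (hm0b : ∃ B : ℝ, ∀ x ∈ Set.Icc (0:ℝ) 1, |m0 x| ≤ B)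
    (hm0 : ∀ x ∈ Set.Icc (0:ℝ) 1, 0 ≤ m0 x)
    (ψ : ℕ → ℕ → ℝ) (hψ : MemM I J 0 ψ) :
    ∃ φ : ℕ → ℕ → ℝ, BScheme T σ I J f uT ψ φ ∧
      ∀ φ' : ℕ → ℕ → ℝ, BScheme T σ I J f uT ψ φ' →
        ∀ i ≤ I, ∀ j ≤ J, φ' i j = φ i j :=
  stmt_1_general T σ hT I J f uT hfc hfneg hfmono ψ hψ
end
end

section
/- Let ε > 0. For every φ̂ ∈ M_ε there exists a unique ψ̂ ∈ M satisfying the discrete forward scheme (Ê_ψ) with data φ̂ (equations for 0 ≤ i ≤ I−1, 0 ≤ j ≤ J, with initial condition ψ̂_{0,j} = m_0(x_j)/φ̂_{0,j}). Hence the map Ψ̂ : M_ε → M sending φ̂ to this solution is well defined; moreover ψ̂ = Ψ̂(φ̂) has all entries nonnegative, i.e. Ψ̂(φ̂) ∈ M_0. -/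
noncomputable section

open Real Filter

/-!
Write `a = I/T`, `β = σ² J²/2` and `g_j(s) = f(x_j, φ_{i+1,j} s) s / σ²`. One time step of the
scheme is the finite system `(a + 2β) v_j - g_j(v_j) = a p_j + β (v_{j+1} + v_{j-1})`, where `p`
is the previous row. Once the argument of `f` is cut off at `0`, every `g_j` is continuous and
antitone. Then `s ↦ (a + 2β) s - g_j(s)` is a bijection of `ℝ` whose inverse is
`1/(a + 2β)`-Lipschitz. Solving the system coordinatewise is therefore a contraction of ratio
`2β/(a + 2β) < 1` in the sup norm, and Banach's theorem gives a unique solution. A discrete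
minimum principle (this is where `f ≤ 0` enters) makes every solution with nonnegative data
nonnegative. So the cut-off changes nothing, and uniqueness also holds for the original system.
Induction on the time index then gives the result.
-/

open Function

section Scalar

variable {c : ℝ} {g : ℝ → ℝ}

lemma mul_abs_sub_le_abs_of_antitone (hc : 0 ≤ c) (hg : Antitone g) (s t : ℝ) :
    c * |s - t| ≤ |(c * s - g s) - (c * t - g t)| := by
  rcases le_total s t with hst | hts
  · have := hg hst
    rw [abs_of_nonpos (by linarith), abs_of_nonpos (by nlinarith)]
    nlinarith
  · have := hg hts
    rw [abs_of_nonneg (by linarith), abs_of_nonneg (by nlinarith)]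
    nlinarith

lemma injective_mul_sub_of_antitone (hc : 0 < c) (hg : Antitone g) :
    Injective fun s => c * s - g s := by
  intro s t hst
  have := mul_abs_sub_le_abs_of_antitone hc.le hg s t
  simp only [hst, sub_self, abs_zero] at this
  exact sub_eq_zero.1 (abs_nonpos_iff.1 (nonpos_of_mul_nonpos_right this hc))

lemma surjective_mul_sub_of_antitone (hc : 0 < c) (hg : Antitone g) (hgc : Continuous g) :
    Surjective fun s => c * s - g s := by
  refine Continuous.surjective (by fun_prop) ?_ ?_
  · refine tendsto_atTop_mono' _ ?_ (tendsto_atTop_add_const_right _ (-g 0)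
      (tendsto_id.const_mul_atTop hc))
    filter_upwards [eventually_ge_atTop 0] with s hs
    simp only [id]
    linarith [hg hs]
  · refine tendsto_atBot_mono' _ ?_ (tendsto_atBot_add_const_right _ (-g 0)
      (tendsto_id.const_mul_atBot hc))
    filter_upwards [eventually_le_atBot 0] with s hs
    simp only [id]
    linarith [hg hs]

end Scalar

lemma antitone_mul_max_zero {k : ℝ → ℝ} (hk : Antitone k) (hk₀ : ∀ u, k u ≤ 0) :
    Antitone fun s => k (max s 0) * s := by
  intro s t hst
  show k (max t 0) * t ≤ k (max s 0) * s
  have hkst : k (max t 0) ≤ k (max s 0) := hk (max_le_max_right 0 hst)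
  rcases le_total 0 s with hs | hs
  · rw [max_eq_left hs, max_eq_left (hs.trans hst)] at hkst ⊢
    nlinarith [hk₀ s]
  · rw [max_eq_right hs] at hkst ⊢
    rcases le_total t 0 with ht | ht
    · rw [max_eq_right ht]
      nlinarith [hk₀ 0]
    · nlinarith [hk₀ 0, hk₀ (max t 0)]

section ImplicitStep

variable {ι : Type*} [Fintype ι] (a β : ℝ) (g : ι → ℝ → ℝ) (p : ι → ℝ) (up down : ι → ι)

def ImplicitStep (v : ι → ℝ) : Prop :=
  ∀ j, (a + 2 * β) * v j - g j (v j) = a * p j + β * (v (up j) + v (down j))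

variable {a β g p up down}

theorem existsUnique_implicitStep (ha : 0 < a) (hβ : 0 ≤ β) (hg : ∀ j, Antitone (g j))
    (hgc : ∀ j, Continuous (g j)) : ∃! v, ImplicitStep a β g p up down v := by
  set c := a + 2 * β
  have hc : 0 < c := by positivity
  let e : ι → ℝ ≃ ℝ := fun j => Equiv.ofBijective (fun s => c * s - g j s)
    ⟨injective_mul_sub_of_antitone hc (hg j), surjective_mul_sub_of_antitone hc (hg j) (hgc j)⟩
  have he_symm (j : ι) (x y : ℝ) : c * dist ((e j).symm x) ((e j).symm y) ≤ dist x y := by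
    calc c * dist ((e j).symm x) ((e j).symm y)
        ≤ |e j ((e j).symm x) - e j ((e j).symm y)| :=
          mul_abs_sub_le_abs_of_antitone hc.le (hg j) _ _
      _ = dist x y := by simp only [Equiv.apply_symm_apply, Real.dist_eq]
  let F : (ι → ℝ) → ι → ℝ := fun v j => (e j).symm (a * p j + β * (v (up j) + v (down j)))
  have hF : ContractingWith (2 * β / c).toNNReal F := by
    refine ⟨Real.toNNReal_lt_one.2 ((div_lt_one hc).2 (by linarith)), ?_⟩
    refine LipschitzWith.of_dist_le_mul fun v w => (dist_pi_le_iff (by positivity)).2 fun j => ?_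
    rw [Real.coe_toNNReal _ (by positivity), div_mul_eq_mul_div, le_div_iff₀ hc, mul_comm]
    refine (he_symm j _ _).trans ?_
    have hup := dist_le_pi_dist v w (up j)
    have hdown := dist_le_pi_dist v w (down j)
    rw [Real.dist_eq] at hup hdown ⊢
    calc |a * p j + β * (v (up j) + v (down j)) - (a * p j + β * (w (up j) + w (down j)))|
        = |β * ((v (up j) - w (up j)) + (v (down j) - w (down j)))| := by congr 1; ring
      _ = β * |(v (up j) - w (up j)) + (v (down j) - w (down j))| := by
          rw [abs_mul, abs_of_nonneg hβ]
      _ ≤ β * (|v (up j) - w (up j)| + |v (down j) - w (down j)|) := by gcongr; exact abs_add_le _ _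
      _ ≤ 2 * β * dist v w := by nlinarith
  have hfix (v : ι → ℝ) : IsFixedPt F v ↔ ImplicitStep a β g p up down v := by
    simp only [IsFixedPt, funext_iff, F, ImplicitStep, Equiv.symm_apply_eq]
    exact forall_congr' fun j => eq_comm
  exact ⟨_, (hfix _).1 hF.fixedPoint_isFixedPt, fun v hv => hF.fixedPoint_unique ((hfix v).2 hv)⟩

theorem ImplicitStep.nonneg (ha : 0 < a) (hβ : 0 ≤ β) (hg : ∀ j s, s < 0 → 0 ≤ g j s) (hp : 0 ≤ p)
    {v : ι → ℝ} (hv : ImplicitStep a β g p up down v) : 0 ≤ v := by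
  intro j
  have : Nonempty ι := ⟨j⟩
  obtain ⟨j₀, hj₀⟩ := Finite.exists_min v
  refine le_trans (le_of_not_gt fun hneg => ?_) (hj₀ j)
  have := hv j₀
  nlinarith [mul_le_mul_of_nonneg_left (hj₀ (up j₀)) hβ,
    mul_le_mul_of_nonneg_left (hj₀ (down j₀)) hβ, hg j₀ _ hneg, mul_nonneg ha.le (hp j₀),
    mul_neg_of_pos_of_neg ha hneg]

theorem existsUnique_implicitStep_mul_self {k : ι → ℝ → ℝ} (ha : 0 < a) (hβ : 0 ≤ β)
    (hk : ∀ j, Antitone (k j)) (hk₀ : ∀ j u, k j u ≤ 0)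
    (hkc : ∀ j, Continuous (k j)) (hp : 0 ≤ p) :
    (∃! v, ImplicitStep a β (fun j s => k j s * s) p up down v) ∧
      ∀ v, ImplicitStep a β (fun j s => k j s * s) p up down v → 0 ≤ v := by
  have hsign {κ : ℝ → ℝ} (hκ : ∀ u, κ u ≤ 0) (s : ℝ) (hs : s < 0) : 0 ≤ κ s * s :=
    mul_nonneg_of_nonpos_of_nonpos (hκ s) hs.le
  have hnonneg : ∀ v, ImplicitStep a β (fun j s => k j s * s) p up down v → 0 ≤ v :=
    fun v hv => hv.nonneg ha hβ (fun j => hsign (hk₀ j)) hp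
  have htrunc {v : ι → ℝ} (hv : 0 ≤ v) :
      ImplicitStep a β (fun j s => k j (max s 0) * s) p up down v ↔
        ImplicitStep a β (fun j s => k j s * s) p up down v :=
    forall_congr' fun j => by dsimp only; rw [max_eq_left (show 0 ≤ v j from hv j)]
  obtain ⟨v, hv, hvuniq⟩ := existsUnique_implicitStep (p := p) (up := up) (down := down) ha hβ
    (fun j => antitone_mul_max_zero (hk j) (hk₀ j)) (fun j => by have := hkc j; fun_prop)
  have hv₀ : 0 ≤ v := hv.nonneg ha hβ (fun j => hsign fun u => hk₀ j (max u 0)) hp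
  exact ⟨⟨v, (htrunc hv₀).1 hv, fun w hw => hvuniq w ((htrunc (hnonneg w hw)).2 hw)⟩, hnonneg⟩

end ImplicitStep

theorem exists_unique_recurrence {X : Type*} (Adm : X → Prop) (P : ℕ → X → X → Prop) (I : ℕ)
    {x₀ : X} (h₀ : Adm x₀) (hstep : ∀ i < I, ∀ p, Adm p → (∃! v, P i p v) ∧ ∀ v, P i p v → Adm v) :
    ∃ u : ℕ → X, u 0 = x₀ ∧ (∀ i < I, P i (u i) (u (i + 1))) ∧ (∀ i ≤ I, Adm (u i)) ∧
      ∀ u' : ℕ → X, u' 0 = x₀ → (∀ i < I, P i (u' i) (u' (i + 1))) → ∀ i ≤ I, u' i = u i := by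
  have : Nonempty X := ⟨x₀⟩
  choose! S hS using fun i hi p hp => (hstep i hi p hp).1.exists
  let u : ℕ → X := fun n => Nat.rec x₀ S n
  have hadm : ∀ i ≤ I, Adm (u i) := by
    intro i hi
    induction i with
    | zero => exact h₀
    | succ i ih =>
      have hu := ih (by omega)
      exact (hstep i hi (u i) hu).2 _ (hS i hi _ hu)
  refine ⟨u, rfl, fun i hi => hS i hi _ (hadm i hi.le), hadm, fun u' hu'₀ hu' i hi => ?_⟩
  induction i with
  | zero => exact hu'₀
  | succ i ih =>
    have hu := hadm i (by omega)
    have hu'P := hu' i hi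
    rw [ih (by omega)] at hu'P
    exact (hstep i hi (u i) hu).1.unique hu'P (hS i hi _ hu)

section Grid

variable {J : ℕ}

def clampSucc (J : ℕ) (j : Fin (J + 1)) : Fin (J + 1) := ⟨min (j + 1) J, by omega⟩

def clampPred (J : ℕ) (j : Fin (J + 1)) : Fin (J + 1) := ⟨j - 1, by omega⟩

def row (J : ℕ) (ψ : ℕ → ℕ → ℝ) (i : ℕ) (j : Fin (J + 1)) : ℝ := ψ i j

def ofRows (J : ℕ) (u : ℕ → Fin (J + 1) → ℝ) (i j : ℕ) : ℝ :=
  if h : j < J + 1 then u i ⟨j, h⟩ else 0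

lemma ofRows_of_le (u : ℕ → Fin (J + 1) → ℝ) (i : ℕ) {j : ℕ} (hj : j ≤ J) :
    ofRows J u i j = u i ⟨j, by omega⟩ :=
  dif_pos _

@[simp]
lemma row_ofRows (u : ℕ → Fin (J + 1) → ℝ) (i : ℕ) : row J (ofRows J u) i = u i :=
  funext fun j => ofRows_of_le u i (Fin.is_le j)

lemma gridPoint_mem_Icc (j : Fin (J + 1)) : ((j : ℕ) : ℝ) / J ∈ Set.Icc (0 : ℝ) 1 :=
  ⟨by positivity, div_le_one_of_le₀ (by exact_mod_cast Fin.is_le j) (Nat.cast_nonneg J)⟩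

end Grid

section ForwardScheme

variable {T σ : ℝ} {I J : ℕ} {f : ℝ → ℝ → ℝ} {m0 : ℝ → ℝ} {φ ψ : ℕ → ℕ → ℝ}

def forwardCoeff (σ : ℝ) (J : ℕ) (f : ℝ → ℝ → ℝ) (φ : ℕ → ℕ → ℝ) (i : ℕ) (j : Fin (J + 1))
    (u : ℝ) : ℝ :=
  1 / σ ^ 2 * f (((j : ℕ) : ℝ) / J) (φ (i + 1) j * u)

lemma forwardCoeff_nonpos (hfneg : ∀ x ∈ Set.Icc (0:ℝ) 1, ∀ ξ : ℝ, f x ξ ≤ 0) (i : ℕ)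
    (j : Fin (J + 1)) (u : ℝ) : forwardCoeff σ J f φ i j u ≤ 0 :=
  mul_nonpos_of_nonneg_of_nonpos (by positivity) (hfneg _ (gridPoint_mem_Icc j) _)

lemma antitone_forwardCoeff (hfmono : ∀ x ∈ Set.Icc (0:ℝ) 1, Antitone (f x)) {i : ℕ}
    {j : Fin (J + 1)} (hφ : 0 ≤ φ (i + 1) j) : Antitone (forwardCoeff σ J f φ i j) :=
  fun _ _ huv => mul_le_mul_of_nonneg_left
    (hfmono _ (gridPoint_mem_Icc j) (mul_le_mul_of_nonneg_left huv hφ)) (by positivity)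

lemma continuous_forwardCoeff (hfc : ∀ x ∈ Set.Icc (0:ℝ) 1, Continuous (f x)) (i : ℕ)
    (j : Fin (J + 1)) : Continuous (forwardCoeff σ J f φ i j) := by
  have := hfc _ (gridPoint_mem_Icc j)
  unfold forwardCoeff
  fun_prop

lemma forward_difference_eq_iff {T σ Ir Jr s p n₁ n₂ R : ℝ} :
    (s - p) / (T / Ir) - σ ^ 2 / 2 * ((n₁ - 2 * s + n₂) / (1 / Jr) ^ 2) = R ↔
      (Ir / T + 2 * (σ ^ 2 * Jr ^ 2 / 2)) * s - R
        = Ir / T * p + σ ^ 2 * Jr ^ 2 / 2 * (n₁ + n₂) := by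
  rw [div_div_eq_mul_div, one_div, inv_pow, div_inv_eq_mul]
  constructor <;> intro h <;> linear_combination h

lemma fScheme_iff : FScheme T σ I J f m0 φ ψ ↔
    (∀ i < I, ImplicitStep (I / T) (σ ^ 2 * J ^ 2 / 2) (fun j s => forwardCoeff σ J f φ i j s * s)
      (row J ψ i) (clampSucc J) (clampPred J) (row J ψ (i + 1))) ∧
    row J ψ 0 = fun j : Fin (J + 1) => m0 (((j : ℕ) : ℝ) / J) / φ 0 j := by
  unfold FScheme ImplicitStep
  refine and_congr (forall₂_congr fun i _ => ?_) ?_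
  · rw [Fin.forall_iff]
    exact forall_congr' fun j => ⟨fun h hj => forward_difference_eq_iff.1 (h (by omega)),
      fun h hj => forward_difference_eq_iff.2 (h (by omega))⟩
  · rw [funext_iff, Fin.forall_iff]
    exact forall_congr' fun j => ⟨fun h hj => h (by omega), fun h hj => h (by omega)⟩

end ForwardScheme

theorem stmt_5_general (T σ : ℝ) (hT : 0 < T)
    (I J : ℕ)
    (f : ℝ → ℝ → ℝ) (m0 : ℝ → ℝ)
    (hfc : ∀ x ∈ Set.Icc (0:ℝ) 1, Continuous (f x))
    (hfneg : ∀ x ∈ Set.Icc (0:ℝ) 1, ∀ ξ : ℝ, f x ξ ≤ 0)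
    (hfmono : ∀ x ∈ Set.Icc (0:ℝ) 1, Antitone (f x))
    (hm0 : ∀ x ∈ Set.Icc (0:ℝ) 1, 0 ≤ m0 x)
    (ε : ℝ) (hε : 0 < ε)
    (φ : ℕ → ℕ → ℝ) (hφ : MemM I J ε φ) :
    ∃ ψ : ℕ → ℕ → ℝ, FScheme T σ I J f m0 φ ψ ∧
      (∀ ψ' : ℕ → ℕ → ℝ, FScheme T σ I J f m0 φ ψ' →
        ∀ i ≤ I, ∀ j ≤ J, ψ' i j = ψ i j) ∧
      MemM I J 0 ψ := by
  have hφ₀ (i : ℕ) (hi : i ≤ I) (j : Fin (J + 1)) : 0 ≤ φ i j := hε.le.trans (hφ i hi j j.is_le)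
  obtain ⟨u, hu₀, hu, hu_nonneg, hu_unique⟩ := exists_unique_recurrence (0 ≤ ·)
    (fun i p v => ImplicitStep (I / T) (σ ^ 2 * J ^ 2 / 2)
      (fun j s => forwardCoeff σ J f φ i j s * s) p (clampSucc J) (clampPred J) v) I
    (x₀ := fun j : Fin (J + 1) => m0 (((j : ℕ) : ℝ) / J) / φ 0 j)
    (fun j => div_nonneg (hm0 _ (gridPoint_mem_Icc j)) (hφ₀ 0 I.zero_le j))
    fun i hi p hp => existsUnique_implicitStep_mul_self
      (div_pos (by exact_mod_cast Nat.zero_lt_of_lt hi) hT) (by positivity)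
      (fun j => antitone_forwardCoeff hfmono (hφ₀ (i + 1) hi j)) (forwardCoeff_nonpos hfneg i)
      (continuous_forwardCoeff hfc i) hp
  refine ⟨ofRows J u, fScheme_iff.2 ⟨by simpa using hu, by simpa using hu₀⟩,
    fun ψ' hψ' i hi j hj => ?_, fun i hi j hj => ?_⟩
  · have hrow := hu_unique (row J ψ') (fScheme_iff.1 hψ').2 (fScheme_iff.1 hψ').1 i hi
    rw [ofRows_of_le u i hj, ← hrow]
    rfl
  · rw [ofRows_of_le u i hj]
    exact hu_nonneg i hi _

theorem stmt_5 (T σ : ℝ) (hT : 0 < T) (hσ : 0 < σ)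
    (I J : ℕ) (hI : 1 ≤ I) (hJ : 1 ≤ J)
    (f : ℝ → ℝ → ℝ) (m0 : ℝ → ℝ)
    (hfc : ∀ x ∈ Set.Icc (0:ℝ) 1, Continuous (f x))
    (hfb : ∃ B : ℝ, ∀ x ∈ Set.Icc (0:ℝ) 1, ∀ ξ : ℝ, |f x ξ| ≤ B)
    (hfneg : ∀ x ∈ Set.Icc (0:ℝ) 1, ∀ ξ : ℝ, f x ξ ≤ 0)
    (hfmono : ∀ x ∈ Set.Icc (0:ℝ) 1, Antitone (f x))
    (hm0b : ∃ B : ℝ, ∀ x ∈ Set.Icc (0:ℝ) 1, |m0 x| ≤ B)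
    (hm0 : ∀ x ∈ Set.Icc (0:ℝ) 1, 0 ≤ m0 x)
    (ε : ℝ) (hε : 0 < ε)
    (φ : ℕ → ℕ → ℝ) (hφ : MemM I J ε φ) :
    ∃ ψ : ℕ → ℕ → ℝ, FScheme T σ I J f m0 φ ψ ∧
      (∀ ψ' : ℕ → ℕ → ℝ, FScheme T σ I J f m0 φ ψ' →
        ∀ i ≤ I, ∀ j ≤ J, ψ' i j = ψ i j) ∧
      MemM I J 0 ψ :=
  stmt_5_general T σ hT I J f m0 hfc hfneg hfmono hm0 ε hε φ hφ
end
end
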